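/- arXiv:1510.00462 — 2 statements merged into one kernel-verified Lean document; each statement's English description precedes it below -/
import Mathlib

section
/- Fix d ≥ 2. There exist constants c₁, c₂ > 0 depending only on d such that for every primitive vector a ∈ ℤ^d (i.e., gcd(a₁,…,a_d) = 1, a ≠ 0) and every positive integer N with N ≥ |a|², the following holds: writing R = √N and ã = R·a/|a| for the point of the sphere of radius R in the direction of a, there exists y ∈ ℝ^d with |y|² = N and |y − ã| ≤ c₂·R^{1/2}/|a|^{1/2}, such that no x ∈ ℤ^d with |x|² = N satisfies |x − y| ≤ c₁·R^{1/2}/|a|^{1/2}. In other words, the spherical cap of radius c₂·R^{1/2}/√|a| centred at ã contains an empty sub-cap of radius c₁·R^{1/2}/√|a| with no lattice points of the sphere |x|² = N. -/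
/-!
Lattice points `x` of the sphere `‖x‖ = R` satisfy `⟪x, a⟫ ∈ ℤ`, and on that sphere
`‖x - ã‖² = 2 (R / ‖a‖) (R ‖a‖ - ⟪x, a⟫)` is affine in `⟪x, a⟫`. Choosing `y` on the sphere with
`⟪y, a⟫ ∈ ℤ + 1/2` just below `R ‖a‖` gives `‖y - ã‖² ≤ 2 R / ‖a‖`, while `‖x - ã‖²` and
`‖y - ã‖²` differ by at least `R / ‖a‖` for every lattice point `x`. Since
`|u² - w²| ≤ |u - w| (|u - w| + 2 w)`, no lattice point comes within `√(R / ‖a‖) / 4` of `y`.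
-/

open Module RealInnerProductSpace

lemma abs_norm_sq_sub_norm_sq_le {G : Type*} [SeminormedAddCommGroup G] (u w : G) :
    |‖u‖ ^ 2 - ‖w‖ ^ 2| ≤ ‖u - w‖ * (‖u - w‖ + 2 * ‖w‖) := by
  calc |‖u‖ ^ 2 - ‖w‖ ^ 2| = |‖u‖ - ‖w‖| * (‖u‖ + ‖w‖) := by
        rw [sq_sub_sq, abs_mul, abs_of_nonneg (by positivity), mul_comm]
    _ ≤ ‖u - w‖ * (‖u - w‖ + 2 * ‖w‖) := by
        gcongr ?_ * ?_
        · exact abs_norm_sub_norm_le u w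
        · linarith [norm_le_norm_add_norm_sub' u w]

lemma half_le_abs_intCast_sub_half (n : ℤ) : (1 / 2 : ℝ) ≤ |(n : ℝ) - 1 / 2| := by
  rcases le_or_gt n 0 with hn | hn
  · have : (n : ℝ) ≤ 0 := by exact_mod_cast hn
    exact le_abs.2 (Or.inr (by linarith))
  · have : (1 : ℝ) ≤ n := by exact_mod_cast hn
    exact le_abs.2 (Or.inl (by linarith))

lemma exists_intCast_sub_half_mem_Ico (M : ℝ) : ∃ m : ℤ, (m : ℝ) - 1 / 2 ∈ Set.Ico (M - 1) M :=
  ⟨⌈M - 1 / 2⌉, by linarith [Int.le_ceil (M - 1 / 2)],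
    by linarith [Int.ceil_lt_add_one (M - 1 / 2)]⟩

section InnerProductSpace

variable {E : Type*} [NormedAddCommGroup E] [InnerProductSpace ℝ E]

lemma exists_norm_eq_one_inner_eq_zero [FiniteDimensional ℝ E] (hE : 2 ≤ finrank ℝ E) (a : E) :
    ∃ e : E, ‖e‖ = 1 ∧ ⟪a, e⟫ = 0 := by
  have hK : finrank ℝ (ℝ ∙ a) ≤ 1 := (finrank_span_le_card ({a} : Set E)).trans (by simp)
  have hKperp : (ℝ ∙ a)ᗮ ≠ ⊥ := by
    intro h
    have := (ℝ ∙ a).finrank_add_finrank_orthogonal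
    rw [h, finrank_bot] at this
    omega
  obtain ⟨v, hv, hv0⟩ := Submodule.exists_mem_ne_zero_of_ne_bot hKperp
  refine ⟨‖v‖⁻¹ • v, norm_smul_inv_norm hv0, ?_⟩
  rw [real_inner_smul_right, Submodule.mem_orthogonal_singleton_iff_inner_right.1 hv, mul_zero]

lemma exists_norm_eq_inner_eq [FiniteDimensional ℝ E] (hE : 2 ≤ finrank ℝ E) {a : E} {r p : ℝ}
    (ha : a ≠ 0) (hp : |p| ≤ r * ‖a‖) : ∃ y : E, ‖y‖ = r ∧ ⟪y, a⟫ = p := by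
  obtain ⟨e, he, hae⟩ := exists_norm_eq_one_inner_eq_zero hE a
  have hA : 0 < ‖a‖ := norm_pos_iff.2 ha
  have hr : 0 ≤ r := nonneg_of_mul_nonneg_left ((abs_nonneg p).trans hp) hA
  have hpA : (p / ‖a‖) ^ 2 ≤ r ^ 2 := by
    rw [div_pow, div_le_iff₀ (by positivity), ← mul_pow, ← sq_abs]
    exact pow_le_pow_left₀ (abs_nonneg p) hp 2
  set s := √(r ^ 2 - (p / ‖a‖) ^ 2)
  refine ⟨(p / ‖a‖ ^ 2) • a + s • e, ?_, ?_⟩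
  · rw [← sq_eq_sq₀ (norm_nonneg _) hr, norm_add_sq_real, real_inner_smul_left,
      real_inner_smul_right, hae, norm_smul, norm_smul, he, Real.norm_eq_abs, Real.norm_eq_abs,
      mul_pow, mul_pow, sq_abs, sq_abs, Real.sq_sqrt (by linarith)]
    field_simp
    ring
  · rw [inner_add_left, real_inner_smul_left, real_inner_smul_left, real_inner_self_eq_norm_sq,
      real_inner_comm, hae]
    field_simp
    ring

lemma norm_sub_smul_sq_of_norm_eq {a z : E} {r : ℝ} (ha : a ≠ 0) (hz : ‖z‖ = r) :
    ‖z - (r / ‖a‖) • a‖ ^ 2 = 2 * (r / ‖a‖) * (r * ‖a‖ - ⟪z, a⟫) := by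
  have hA : ‖a‖ ≠ 0 := norm_ne_zero_iff.2 ha
  rw [norm_sub_sq_real, hz, real_inner_smul_right, norm_smul, Real.norm_eq_abs, mul_pow, sq_abs]
  field_simp
  ring

theorem exists_norm_eq_forall_inner_intCast_le [FiniteDimensional ℝ E] (hE : 2 ≤ finrank ℝ E)
    {a : E} {r : ℝ} (hra : 1 / 2 ≤ r * ‖a‖) :
    ∃ y : E, ‖y‖ = r ∧ ‖y - (r / ‖a‖) • a‖ ^ 2 ≤ 2 * (r / ‖a‖) ∧
      ∀ x : E, ‖x‖ = r → ∀ k : ℤ, ⟪x, a⟫ = k →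
        r / ‖a‖ ≤ ‖x - y‖ * (‖x - y‖ + 2 * ‖y - (r / ‖a‖) • a‖) := by
  have ha : a ≠ 0 := by rintro rfl; norm_num at hra
  have hA : 0 < ‖a‖ := norm_pos_iff.2 ha
  have hr : 0 < r := pos_of_mul_pos_left (by linarith) hA.le
  obtain ⟨m, hm₁, hm₂⟩ := exists_intCast_sub_half_mem_Ico (r * ‖a‖)
  obtain ⟨y, hy, hya⟩ := exists_norm_eq_inner_eq (p := m - 1 / 2) hE ha
    (abs_le.2 ⟨by linarith, hm₂.le⟩)
  refine ⟨y, hy, ?_, fun x hx k hxa => ?_⟩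
  · rw [norm_sub_smul_sq_of_norm_eq ha hy, hya]
    have : 0 < r / ‖a‖ := by positivity
    nlinarith
  -- on the sphere `‖z - ã‖ ^ 2` is affine in `⟪z, a⟫`, which differs by a half-integer at `x`, `y`
  have hgap : r / ‖a‖ ≤ |‖x - (r / ‖a‖) • a‖ ^ 2 - ‖y - (r / ‖a‖) • a‖ ^ 2| := by
    rw [norm_sub_smul_sq_of_norm_eq ha hx, norm_sub_smul_sq_of_norm_eq ha hy, hxa, hya,
      show 2 * (r / ‖a‖) * (r * ‖a‖ - k) - 2 * (r / ‖a‖) * (r * ‖a‖ - (m - 1 / 2))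
        = 2 * (r / ‖a‖) * (((m - k : ℤ) : ℝ) - 1 / 2) by push_cast; ring,
      abs_mul, abs_of_pos (by positivity)]
    nlinarith [half_le_abs_intCast_sub_half (m - k), show 0 < r / ‖a‖ by positivity]
  have hnear := abs_norm_sq_sub_norm_sq_le (x - (r / ‖a‖) • a) (y - (r / ‖a‖) • a)
  rw [sub_sub_sub_cancel_right] at hnear
  exact hgap.trans hnear

theorem exists_norm_eq_forall_inner_intCast_lt_norm_sub [FiniteDimensional ℝ E]
    (hE : 2 ≤ finrank ℝ E) {a : E} {r : ℝ} (hra : 1 / 2 ≤ r * ‖a‖) :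
    ∃ y : E, ‖y‖ = r ∧ ‖y - (r / ‖a‖) • a‖ ≤ 2 * √(r / ‖a‖) ∧
      ∀ x : E, ‖x‖ = r → ∀ k : ℤ, ⟪x, a⟫ = k → 1 / 4 * √(r / ‖a‖) < ‖x - y‖ := by
  obtain ⟨y, hy, hyã, hfar⟩ := exists_norm_eq_forall_inner_intCast_le hE hra
  have hrA : 0 < r / ‖a‖ := div_pos_iff.2 (mul_pos_iff.1 (by linarith))
  set ρ := √(r / ‖a‖)
  have hρ : ρ ^ 2 = r / ‖a‖ := Real.sq_sqrt hrA.le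
  have hρ0 : 0 < ρ := Real.sqrt_pos.2 hrA
  have hyã' : ‖y - (r / ‖a‖) • a‖ ≤ 3 / 2 * ρ :=
    le_of_pow_le_pow_left₀ two_ne_zero (by positivity) (by nlinarith)
  refine ⟨y, hy, by linarith, fun x hx k hxa => ?_⟩
  by_contra! hxy
  nlinarith [hfar x hx k hxa, norm_nonneg (x - y)]

end InnerProductSpace

lemma EuclideanSpace.sqrt_sum_sq_eq_norm {ι : Type*} [Fintype ι] (v : EuclideanSpace ℝ ι) :
    √(∑ i, v i ^ 2) = ‖v‖ := by
  rw [← EuclideanSpace.real_norm_sq_eq, Real.sqrt_sq (norm_nonneg v)]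

lemma one_le_sum_sq_intCast {ι : Type*} [Fintype ι] {a : ι → ℤ} (ha : a ≠ 0) :
    (1 : ℝ) ≤ ∑ i, (a i : ℝ) ^ 2 := by
  obtain ⟨i, hi⟩ := Function.ne_iff.1 ha
  have hai : (0 : ℤ) < a i ^ 2 := sq_pos_of_ne_zero hi
  calc (1 : ℝ) ≤ (a i : ℝ) ^ 2 := by exact_mod_cast hai
    _ ≤ ∑ j, (a j : ℝ) ^ 2 :=
      Finset.single_le_sum (fun j _ => sq_nonneg (a j : ℝ)) (Finset.mem_univ i)

lemma EuclideanSpace.inner_toLp_intCast {ι : Type*} [Fintype ι] (x a : ι → ℤ) :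
    ⟪(WithLp.toLp 2 (fun i => (x i : ℝ)) : EuclideanSpace ℝ ι), WithLp.toLp 2 (fun i => (a i : ℝ))⟫
      = ((∑ i, x i * a i : ℤ) : ℝ) := by
  simp [PiLp.inner_apply, mul_comm]

/-- Repulsion of lattice points on spheres: near the point of the sphere of radius `R = √N` in
the direction of a primitive vector `a`, there is an empty sub-cap of radius
`≍ R^{1/2}/|a|^{1/2}` containing no lattice points of the sphere `|x|² = N`. -/
theorem stmt_5 (d : ℕ) (hd : 2 ≤ d) :
    ∃ c₁ : ℝ, 0 < c₁ ∧ ∃ c₂ : ℝ, 0 < c₂ ∧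
      ∀ a : Fin d → ℤ, a ≠ 0 → Finset.univ.gcd a = 1 →
      ∀ N : ℕ, 0 < N → (∑ i, (a i : ℝ) ^ 2) ≤ (N : ℝ) →
      ∃ y : Fin d → ℝ,
        (∑ i, y i ^ 2) = (N : ℝ) ∧
        Real.sqrt (∑ i, (y i - Real.sqrt N * (a i : ℝ) / Real.sqrt (∑ j, (a j : ℝ) ^ 2)) ^ 2)
          ≤ c₂ * Real.sqrt (Real.sqrt N) / Real.sqrt (Real.sqrt (∑ j, (a j : ℝ) ^ 2)) ∧
        ∀ x : Fin d → ℤ, (∑ i, x i ^ 2) = (N : ℤ) →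
          ¬ Real.sqrt (∑ i, ((x i : ℝ) - y i) ^ 2)
              ≤ c₁ * Real.sqrt (Real.sqrt N) / Real.sqrt (Real.sqrt (∑ j, (a j : ℝ) ^ 2)) := by
  refine ⟨1 / 4, by norm_num, 2, by norm_num, fun a ha _ N hN _ => ?_⟩
  set A : EuclideanSpace ℝ (Fin d) := WithLp.toLp 2 (fun i => (a i : ℝ))
  have hA : √(∑ j, (a j : ℝ) ^ 2) = ‖A‖ := EuclideanSpace.sqrt_sum_sq_eq_norm A
  have hra : 1 / 2 ≤ √N * ‖A‖ := by
    have h1 : 1 ≤ ‖A‖ := hA ▸ Real.one_le_sqrt.2 (one_le_sum_sq_intCast ha)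
    have h2 : 1 ≤ √(N : ℝ) := Real.one_le_sqrt.2 (by exact_mod_cast hN)
    nlinarith
  obtain ⟨y, hy, hyã, hfar⟩ :=
    exists_norm_eq_forall_inner_intCast_lt_norm_sub (by simpa using hd) hra
  have hρ : √√(N : ℝ) / √‖A‖ = √(√N / ‖A‖) := (Real.sqrt_div' _ (norm_nonneg A)).symm
  simp only [hA, mul_div_assoc, hρ]
  refine ⟨fun i => y i, ?_, ?_, fun x hx hxy => ?_⟩
  · simp only [← EuclideanSpace.real_norm_sq_eq, hy, Real.sq_sqrt (Nat.cast_nonneg N)]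
  · convert hyã using 1
    rw [← EuclideanSpace.sqrt_sum_sq_eq_norm (y - _)]
    congr! 3 with i
    simp only [PiLp.sub_apply, PiLp.smul_apply, smul_eq_mul, sub_right_inj, A]
    ring
  · set X : EuclideanSpace ℝ (Fin d) := WithLp.toLp 2 (fun i => (x i : ℝ))
    have hX : ‖X‖ = √N := by
      rw [← EuclideanSpace.sqrt_sum_sq_eq_norm]
      congr 1
      simp only [X]
      exact_mod_cast hx
    refine (hfar X hX _ (EuclideanSpace.inner_toLp_intCast x a)).not_ge ?_
    rw [← EuclideanSpace.sqrt_sum_sq_eq_norm]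
    exact hxy
end

section
/- Let A be a symmetric d×d integer matrix and F(b) = bᵀAb. Let λ ∈ ℤ^d, k ∈ ℤ, m, q positive integers, a, l ∈ ℤ, and c ∈ ℤ^d. Define S_{mq}(a,l;c) := Σ_{b ∈ (ℤ/mqℤ)^d} e( ((lq+a)(2λᵀAb − k) + a·m·F(b) + ⟨c,b⟩) / (mq) ). If S_{mq}(a,l;c) ≠ 0, then c ≡ −2(lq+a)·Aλ (mod m). Consequently, setting S_{mq}(c) := Σ_{l mod m} Σ_{a ∈ (ℤ/qℤ)^×} S_{mq}(a,l;c), one has S_{mq}(c) = 0 unless c ≡ α·Aλ (mod m) for some integer α. -/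
open Matrix

/-- `e(t) = e^{2πit}`. -/
noncomputable def eC (t : ℝ) : ℂ := Complex.exp (2 * Real.pi * Complex.I * t)

/-- The quadratic exponential sum
`S_{mq}(a,l;c) = Σ_{b ∈ (ℤ/mqℤ)^d} e(((lq+a)(2λᵀAb − k) + a·m·F(b) + ⟨c,b⟩)/(mq))`,
summed over the complete set of representatives `0, 1, …, mq − 1` in each coordinate. -/
noncomputable def Smq (d m q : ℕ) (A : Matrix (Fin d) (Fin d) ℤ)
    (lam : Fin d → ℤ) (k a l : ℤ) (c : Fin d → ℤ) : ℂ :=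
  ∑ b : Fin d → Fin (m * q),
    eC ((((l * (q : ℤ) + a) * (2 * (lam ⬝ᵥ A.mulVec fun i => ((b i : ℕ) : ℤ)) - k)
        + a * (m : ℤ) * ((fun i => ((b i : ℕ) : ℤ)) ⬝ᵥ A.mulVec fun i => ((b i : ℕ) : ℤ))
        + c ⬝ᵥ (fun i => ((b i : ℕ) : ℤ)) : ℤ) : ℝ) / ((m * q : ℕ) : ℝ))

/-- `S_{mq}(c) = Σ_{l mod m} Σ_{a ∈ (ℤ/qℤ)^×} S_{mq}(a,l;c)`. -/
noncomputable def SmqTotal (d m q : ℕ) (A : Matrix (Fin d) (Fin d) ℤ)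
    (lam : Fin d → ℤ) (k : ℤ) (c : Fin d → ℤ) : ℂ :=
  ∑ l ∈ Finset.range m, ∑ a ∈ (Finset.range q).filter (fun a => Nat.Coprime a q),
    Smq d m q A lam k (a : ℤ) (l : ℤ) c

/-!
Translating `b` by `q eᵢ` changes the phase `(lq+a)(2λᵀAb − k) + am·bᵀAb + ⟨c,b⟩` by
`q (2(lq+a)(Aλ)ᵢ + cᵢ)` modulo `mq`: by symmetry of `A` the cross terms combine, and the term
quadratic in the shift carries the factor `amq`. Reading the phase in `ℤ/mqℤ`, the sum is
therefore fixed by multiplication with `e(q (2(lq+a)(Aλ)ᵢ + cᵢ)/(mq))`, which must equal `1`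
if the sum is nonzero; that is, `m ∣ 2(lq+a)(Aλ)ᵢ + cᵢ`.
-/

open Finset

section QuadPhase

variable {R S : Type*} {n : Type*} [Fintype n]

/-- The phase of `S_{mq}(a,l;c)` at `b`, with `L = lq + a` and `M = a m`. -/
def quadPhase [CommRing R] (A : Matrix n n R) (lam c : n → R) (k L M : R) (b : n → R) : R :=
  L * (2 * (lam ⬝ᵥ A *ᵥ b) - k) + M * (b ⬝ᵥ A *ᵥ b) + c ⬝ᵥ b

lemma map_quadPhase [CommRing R] [CommRing S] (f : R →+* S) (A : Matrix n n R)
    (lam c : n → R) (k L M : R) (b : n → R) :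
    f (quadPhase A lam c k L M b)
      = quadPhase (A.map f) (f ∘ lam) (f ∘ c) (f k) (f L) (f M) (f ∘ b) := by
  have hAb : f ∘ (A *ᵥ b) = A.map f *ᵥ (f ∘ b) := funext (RingHom.map_mulVec f A b)
  simp only [quadPhase, map_add, map_sub, map_mul, map_ofNat, RingHom.map_dotProduct, hAb]

lemma quadPhase_add_single [CommRing R] [DecidableEq n] {A : Matrix n n R} (hA : A.IsSymm)
    (lam c : n → R) (k L M : R) (b : n → R) (i : n) (t : R) :
    quadPhase A lam c k L M (b + Pi.single i t)
      = quadPhase A lam c k L M b + t * (2 * L * (A *ᵥ lam) i + c i)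
        + M * t * (2 * (A *ᵥ b) i + t * A i i) := by
  have hAe : A *ᵥ Pi.single i t = fun j => A j i * t := funext fun j => dotProduct_single _ _ _
  have hsymm (u : n → R) : (u ⬝ᵥ fun j => A j i * t) = t * (A *ᵥ u) i := by
    simp only [dotProduct, mulVec, mul_sum]
    exact sum_congr rfl fun j _ => by rw [hA.apply i j]; ring
  simp only [quadPhase, mulVec_add, dotProduct_add, add_dotProduct, hAe, hsymm, single_dotProduct,
    dotProduct_single, Pi.add_apply]
  ring

end QuadPhase

lemma eq_one_of_sum_ne_zero_of_map_add_eq_mul {G R : Type*} [AddGroup G] [Fintype G]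
    [CommRing R] [IsDomain R] {φ : G → R} {u : G} {z : R} (hφ : ∀ b, φ (b + u) = z * φ b)
    (hS : ∑ b, φ b ≠ 0) : z = 1 := by
  have hshift : ∑ b, φ b = z * ∑ b, φ b := by
    rw [mul_sum, ← Equiv.sum_comp (Equiv.addRight u)]
    exact sum_congr rfl fun b _ => hφ b
  exact (mul_left_eq_self₀.mp hshift.symm).resolve_right hS

lemma eC_intCast_div (N : ℕ) [NeZero N] (x : ℤ) :
    eC ((x : ℝ) / N) = ZMod.stdAddChar (x : ZMod N) := by
  rw [eC, ZMod.stdAddChar_coe]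
  push_cast
  ring_nf

lemma bijective_fin_natCast_zmod (N : ℕ) [NeZero N] :
    Function.Bijective fun x : Fin N => ((x : ℕ) : ZMod N) := by
  refine (Fintype.bijective_iff_injective_and_card _).mpr ⟨fun x y hxy => ?_, by simp⟩
  have := congrArg ZMod.val hxy
  rwa [ZMod.val_natCast_of_lt x.isLt, ZMod.val_natCast_of_lt y.isLt, Fin.val_inj] at this

lemma smq_eq_sum_stdAddChar (d m q : ℕ) [NeZero (m * q)] (A : Matrix (Fin d) (Fin d) ℤ)
    (lam : Fin d → ℤ) (k a l : ℤ) (c : Fin d → ℤ) :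
    Smq d m q A lam k a l c = ∑ b : Fin d → ZMod (m * q),
      ZMod.stdAddChar (quadPhase (A.map (↑)) ((↑) ∘ lam) ((↑) ∘ c) (k : ZMod (m * q))
        ((l * q + a : ℤ) : _) ((a * m : ℤ) : _) b) := by
  refine Fintype.sum_bijective (fun b i => ((b i : ℕ) : ZMod (m * q)))
    ((bijective_fin_natCast_zmod _).comp_left) _ _ fun b => ?_
  have hcast := map_quadPhase (Int.castRingHom (ZMod (m * q))) A lam c k (l * q + a) (a * m)
    fun i => ((b i : ℕ) : ℤ)
  simp only [Function.comp_def, eq_intCast, Int.cast_natCast] at hcast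
  rw [eC_intCast_div]
  exact congrArg _ hcast

lemma dvd_of_smq_ne_zero {d m q : ℕ} (hm : 0 < m) (hq : 0 < q) {A : Matrix (Fin d) (Fin d) ℤ}
    (hA : A.IsSymm) {lam : Fin d → ℤ} {k a l : ℤ} {c : Fin d → ℤ}
    (hS : Smq d m q A lam k a l c ≠ 0) (i : Fin d) :
    (m : ℤ) ∣ c i - (-(2 * (l * q + a)) * (A *ᵥ lam) i) := by
  have : NeZero (m * q) := ⟨(Nat.mul_pos hm hq).ne'⟩
  set X : ℤ := 2 * (l * q + a) * (A *ᵥ lam) i + c i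
  rw [smq_eq_sum_stdAddChar] at hS
  set Q := quadPhase (A.map (↑)) ((↑) ∘ lam) ((↑) ∘ c) (k : ZMod (m * q))
    ((l * q + a : ℤ) : _) ((a * m : ℤ) : _) with hQ
  have hshift (b : Fin d → ZMod (m * q)) :
      ZMod.stdAddChar (Q (b + Pi.single i (q : ZMod (m * q))))
        = ZMod.stdAddChar ((q * X : ℤ) : ZMod (m * q)) * ZMod.stdAddChar (Q b) := by
    have hmq : ((a * m : ℤ) : ZMod (m * q)) * q = 0 := by
      rw [Int.cast_mul, mul_assoc]; push_cast; rw [← Nat.cast_mul, ZMod.natCast_self, mul_zero]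
    rw [hQ, quadPhase_add_single (hA.map _), hmq, zero_mul, add_zero,
      ← AddChar.map_add_eq_mul, add_comm]
    have hAlam : (((A *ᵥ lam) i : ℤ) : ZMod (m * q)) = (A.map (↑) *ᵥ ((↑) ∘ lam)) i :=
      RingHom.map_mulVec (Int.castRingHom _) A lam i
    simp only [X, Int.cast_mul, Int.cast_add, Int.cast_ofNat, Int.cast_natCast, hAlam,
      Function.comp_apply]
  have hψ :=
    eq_one_of_sum_ne_zero_of_map_add_eq_mul (φ := fun b => ZMod.stdAddChar (Q b)) hshift hS
  rw [← (ZMod.stdAddChar (N := m * q)).map_zero_eq_one, ZMod.injective_stdAddChar.eq_iff,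
    ZMod.intCast_zmod_eq_zero_iff_dvd, Nat.cast_mul] at hψ
  rw [show c i - (-(2 * (l * q + a)) * (A *ᵥ lam) i) = X by ring]
  exact (mul_dvd_mul_iff_right (Int.natCast_ne_zero.mpr hq.ne')).mp
    (by simpa only [mul_comm (q : ℤ)] using hψ)

/-- If `S_{mq}(a,l;c) ≠ 0` then `c ≡ −2(lq+a)·Aλ (mod m)`; consequently `S_{mq}(c) = 0` unless
`c ≡ α·Aλ (mod m)` for some integer `α`. -/
theorem stmt_10 (d m q : ℕ) (hm : 0 < m) (hq : 0 < q)
    (A : Matrix (Fin d) (Fin d) ℤ) (hA : A.IsSymm)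
    (lam : Fin d → ℤ) (k : ℤ) (c : Fin d → ℤ) :
    (∀ a l : ℤ, Smq d m q A lam k a l c ≠ 0 →
      ∀ i, (m : ℤ) ∣ c i - (-(2 * (l * (q : ℤ) + a)) * A.mulVec lam i)) ∧
    (SmqTotal d m q A lam k c ≠ 0 →
      ∃ α : ℤ, ∀ i, (m : ℤ) ∣ c i - α * A.mulVec lam i) := by
  refine ⟨fun a l hS => dvd_of_smq_ne_zero hm hq hA hS, fun hS => ?_⟩
  obtain ⟨l, -, hl⟩ := exists_ne_zero_of_sum_ne_zero hS
  obtain ⟨a, -, ha⟩ := exists_ne_zero_of_sum_ne_zero hl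
  exact ⟨_, dvd_of_smq_ne_zero hm hq hA ha⟩
end
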